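/- Let φ(z) = (−z² + 2z)/(2z − 1), extended to ℙ¹(ℚ) = ℚ ∪ {∞} by φ(1/2) = ∞ and φ(∞) = ∞. Then the set of rational preperiodic points of φ is exactly {0, 1, ∞, 2, −1, 1/2}, with orbit structure: 0, 1, and ∞ are fixed points, φ(2) = 0, φ(−1) = 1, and φ(1/2) = ∞. In particular φ has exactly three rational fixed points and six rational preperiodic points. -/

import Mathlib

/-!
The rational preperiodic points of `φ(z) = (−z² + 2z)/(2z − 1)` are exactly
`{0, 1, ∞, 2, −1, 1/2}`, with `0`, `1`, `∞` fixed, `φ(2) = 0`, `φ(−1) = 1`,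
`φ(1/2) = ∞`: three rational fixed points and six rational preperiodic
points.

We model ℙ¹(ℚ) as `Option ℚ`, with `none` playing the role of ∞;
`φ(1/2) = ∞` and `φ(∞) = ∞`.
-/

/-- The map `φ(z) = (−z² + 2z)/(2z − 1)` on `ℙ¹(ℚ)`, with `φ(1/2) = ∞` and
`φ(∞) = ∞`. -/
def phi14 : Option ℚ → Option ℚ
  | none => none
  | some x =>
      if 2 * x - 1 = 0 then none
      else some ((-x ^ 2 + 2 * x) / (2 * x - 1))

/-- A point is preperiodic for a self-map `f` if two distinct iterates of `f`
agree on it, i.e. its forward orbit is finite. -/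
def IsPreperiodicPt {X : Type*} (f : X → X) (α : X) : Prop :=
  ∃ i j : ℕ, i < j ∧ f^[i] α = f^[j] α

/-!
Write `x = a / b` in lowest terms. Then `φ(x) = a (2b - a) / (b (2a - b))`, and since `3 a³` and
`3 b³` are integer combinations of these two forms, at most a factor `3` cancels. For the naive
height `H(a / b) = max(|a|, b)` this gives `3 H(φ x) ≥ max(|a (2b - a)|, |b (2a - b)|) > 3 H(x)`
as soon as `H(x) ≥ 6`, so the height grows strictly along the orbit and every iterate of a
preperiodic point has height at most `5`. Among the finitely many such points, all but the six
listed reach height `6` within three steps.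
-/

namespace IsPreperiodicPt

variable {X : Type*} {f : X → X} {α : X}

theorem of_isFixedPt (h : Function.IsFixedPt f α) : IsPreperiodicPt f α :=
  ⟨0, 1, zero_lt_one, h.symm⟩

theorem of_apply (h : IsPreperiodicPt f (f α)) : IsPreperiodicPt f α := by
  obtain ⟨i, j, hij, h⟩ := h
  exact ⟨i + 1, j + 1, Nat.succ_lt_succ hij, by simpa only [Function.iterate_succ_apply] using h⟩

theorem iterate (h : IsPreperiodicPt f α) (n : ℕ) : IsPreperiodicPt f (f^[n] α) := by
  obtain ⟨i, j, hij, h⟩ := h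
  refine ⟨i, j, hij, ?_⟩
  rw [← Function.iterate_add_apply, ← Function.iterate_add_apply, add_comm i, add_comm j,
    Function.iterate_add_apply, h, ← Function.iterate_add_apply]

theorem lt_of_lt_apply {h : X → ℤ} {N : ℤ} (hgrow : ∀ x, N ≤ h x → h x < h (f x))
    (hα : IsPreperiodicPt f α) : h α < N := by
  by_contra! hN
  have hlarge : ∀ n, N ≤ h (f^[n] α) := by
    intro n
    induction n with
    | zero => exact hN
    | succ n ih => rw [Function.iterate_succ_apply']; exact ih.trans (hgrow _ ih).le
  have hmono : StrictMono fun n ↦ h (f^[n] α) := strictMono_nat_of_lt_succ fun n ↦ by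
    simpa only [Function.iterate_succ_apply'] using hgrow _ (hlarge n)
  obtain ⟨i, j, hij, hfix⟩ := hα
  exact (hmono hij).ne (congrArg h hfix)

end IsPreperiodicPt

theorem three_mul_max_abs_lt (a b : ℤ) (h : 6 ≤ max |a| |b|) :
    3 * max |a| |b| < max |a * (2 * b - a)| |b * (2 * a - b)| := by
  wlog hba : |b| ≤ |a| generalizing a b
  · have := this b a (by rwa [max_comm]) (by linarith)
    rwa [max_comm, max_comm |b * _|] at this
  wlog ha : 0 < a generalizing a b
  · have := this (-a) (-b) (by simpa using h) (by simpa using hba)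
      (by rw [max_eq_left hba] at h; cases abs_cases a <;> linarith)
    have e₁ : -a * (2 * -b - -a) = a * (2 * b - a) := by ring
    have e₂ : -b * (2 * -a - -b) = b * (2 * a - b) := by ring
    rwa [e₁, e₂, abs_neg, abs_neg] at this
  rw [max_eq_left hba, abs_of_pos ha] at h ⊢
  obtain ⟨hb₁, hb₂⟩ := abs_le.mp (abs_of_pos ha ▸ hba)
  rcases le_or_gt 4 |2 * b - a| with h4 | h4
  · refine lt_max_of_lt_left ?_
    rw [abs_mul, abs_of_pos ha]
    nlinarith
  · obtain ⟨h4₁, h4₂⟩ := abs_lt.mp h4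
    have hb : 2 ≤ b := by omega
    refine lt_max_of_lt_right (lt_of_lt_of_le ?_ (le_abs_self _))
    nlinarith [mul_nonneg (sub_nonneg.2 hb) (by omega : (0 : ℤ) ≤ 2 * a - b - 3)]

theorem dvd_three_of_dvd_of_dvd {a b c : ℤ} (hab : IsCoprime a b) (hu : c ∣ a * (2 * b - a))
    (hv : c ∣ b * (2 * a - b)) : c ∣ 3 := by
  obtain ⟨s, t, hst⟩ := hab.pow (m := 3) (n := 3)
  -- `3 a³` and `3 b³` are integer combinations of the two forms.
  have h3 : 3 = (s * (2 * b - 3 * a) + t * (4 * b)) * (a * (2 * b - a)) +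
      (s * (4 * a) + t * (2 * a - 3 * b)) * (b * (2 * a - b)) := by
    linear_combination (-3) * hst
  rw [h3]
  exact dvd_add (dvd_mul_of_dvd_right hu _) (dvd_mul_of_dvd_right hv _)

/-- `max(|a|, b)` for `a / b` in lowest terms, and `1` for `∞ = [1 : 0]`. Integer-valued, so
that the finitely many points of small height can be examined by `decide`. -/
def naiveHeight : Option ℚ → ℤ
  | none => 1
  | some q => max |q.num| q.den

theorem max_abs_le_mul_naiveHeight {u v k : ℤ} (hv : v ≠ 0) (hk : 0 < k)
    (h : ∀ c, c ∣ u → c ∣ v → c ∣ k) : max |u| |v| ≤ k * naiveHeight (some (u / v)) := by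
  obtain ⟨c, hu, hv'⟩ := Rat.exists_eq_mul_div_num_and_eq_mul_div_den u hv
  have hc : |c| ≤ k := Int.le_of_dvd hk ((abs_dvd _ _).2 (h c (hu ▸ dvd_mul_right _ _)
    (hv' ▸ dvd_mul_right _ _)))
  generalize ((u : ℚ) / v) = y at hu hv' ⊢
  calc max |u| |v| = |c| * naiveHeight (some y) := by
        rw [naiveHeight, mul_max_of_nonneg _ _ (abs_nonneg c), hu, hv', abs_mul, abs_mul,
          Nat.abs_cast]
    _ ≤ k * naiveHeight (some y) := by
        gcongr
        exact (abs_nonneg _).trans (le_max_left _ _)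

theorem phi14_some_div {a b : ℤ} (hb : b ≠ 0) (hab : 2 * a - b ≠ 0) :
    phi14 (some (a / b)) = some (((a * (2 * b - a) : ℤ) : ℚ) / ((b * (2 * a - b) : ℤ) : ℚ)) := by
  have hb' : (b : ℚ) ≠ 0 := mod_cast hb
  have hab' : 2 * (a : ℚ) - b ≠ 0 := mod_cast hab
  have hq : 2 * ((a : ℚ) / b) - 1 ≠ 0 := by
    rw [show 2 * ((a : ℚ) / b) - 1 = (2 * a - b) / b by field_simp]
    exact div_ne_zero hab' hb'
  rw [phi14, if_neg hq]
  push_cast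
  congr 1
  field_simp
  ring

theorem naiveHeight_lt_naiveHeight_phi14 (α : Option ℚ) (h : 6 ≤ naiveHeight α) :
    naiveHeight α < naiveHeight (phi14 α) := by
  rcases α with _ | q
  · simp [naiveHeight] at h
  have hb : (0 : ℤ) < q.den := mod_cast q.den_pos
  have hq : naiveHeight (some q) = max |q.num| |(q.den : ℤ)| := by rw [abs_of_pos hb]; rfl
  have hab : 2 * q.num - q.den ≠ 0 := by
    intro h0
    have hhalf : q = 1 / 2 := by
      have : (q.den : ℚ) = 2 * q.num := by exact_mod_cast (by linarith : (q.den : ℤ) = 2 * q.num)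
      have hnum : (q.num : ℚ) ≠ 0 := mod_cast (by omega : q.num ≠ 0)
      rw [← Rat.num_div_den q, this]
      field_simp
    subst hhalf
    exact absurd h (by decide +kernel)
  have hφ := phi14_some_div hb.ne' hab
  rw [Int.cast_natCast, Rat.num_div_den] at hφ
  have hgrow := three_mul_max_abs_lt q.num q.den (hq ▸ h)
  have hbound := max_abs_le_mul_naiveHeight (mul_ne_zero hb.ne' hab) three_pos
    fun c hu hv ↦ dvd_three_of_dvd_of_dvd q.isCoprime_num_den hu hv
  rw [hφ]
  linarith

theorem phi14_eq_self_iff (α : Option ℚ) : phi14 α = α ↔ α = some 0 ∨ α = some 1 ∨ α = none := by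
  rcases α with _ | x
  · simp [phi14]
  by_cases hx : 2 * x - 1 = 0
  · obtain rfl : x = 1 / 2 := by linarith
    decide +kernel
  simp only [phi14, if_neg hx, Option.some.injEq, reduceCtorEq, or_false]
  rw [div_eq_iff hx, ← sub_eq_zero,
    show -x ^ 2 + 2 * x - x * (2 * x - 1) = -3 * (x * (x - 1)) by ring]
  simp [sub_eq_zero]

theorem mem_of_isPreperiodicPt_phi14 {q : ℚ} (h : IsPreperiodicPt phi14 (some q)) :
    q ∈ ({0, 1, 2, -1, 1 / 2} : Finset ℚ) := by
  have hsmall (n : ℕ) : naiveHeight (phi14^[n] (some q)) < 6 :=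
    (h.iterate n).lt_of_lt_apply naiveHeight_lt_naiveHeight_phi14
  have hq : max |q.num| (q.den : ℤ) < 6 := hsmall 0
  have hnum : q.num ∈ Finset.Icc (-5) 5 := by
    have := abs_lt.1 ((le_max_left _ _).trans_lt hq)
    exact Finset.mem_Icc.2 ⟨by omega, by omega⟩
  have hden : q.den ∈ Finset.Icc 1 5 := by
    have := (le_max_right _ _).trans_lt hq
    exact Finset.mem_Icc.2 ⟨q.den_pos, by omega⟩
  have hcheck : ∀ a ∈ Finset.Icc (-5 : ℤ) 5, ∀ b ∈ Finset.Icc (1 : ℕ) 5,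
      (a / b : ℚ) ∈ ({0, 1, 2, -1, 1 / 2} : Finset ℚ) ∨
        ∃ n < 4, 6 ≤ naiveHeight (phi14^[n] (some (a / b : ℚ))) := by
    decide +kernel
  rcases Rat.num_div_den q ▸ hcheck _ hnum _ hden with hmem | ⟨n, -, hn⟩
  · exact hmem
  · exact absurd hn (hsmall n).not_ge

theorem phi14_two : phi14 (some 2) = some 0 := by norm_num [phi14]

theorem phi14_neg_one : phi14 (some (-1)) = some 1 := by norm_num [phi14]

theorem phi14_one_half : phi14 (some (1 / 2)) = none := by norm_num [phi14]

theorem setOf_isPreperiodicPt_phi14 : {α : Option ℚ | IsPreperiodicPt phi14 α} =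
    ({some 0, some 1, none, some 2, some (-1), some (1 / 2)} : Set (Option ℚ)) := by
  have hfix (α : Option ℚ) (hα : α = some 0 ∨ α = some 1 ∨ α = none) :
      IsPreperiodicPt phi14 α :=
    .of_isFixedPt ((phi14_eq_self_iff α).2 hα)
  ext α
  constructor
  · rcases α with _ | q
    · simp
    · intro h
      simpa using mem_of_isPreperiodicPt_phi14 h
  · rintro (rfl | rfl | rfl | rfl | rfl | rfl)
    · exact hfix _ (by simp)
    · exact hfix _ (by simp)
    · exact hfix _ (by simp)
    · exact .of_apply (phi14_two ▸ hfix _ (by simp))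
    · exact .of_apply (phi14_neg_one ▸ hfix _ (by simp))
    · exact .of_apply (phi14_one_half ▸ hfix _ (by simp))

theorem phi14_preperiodic_points :
    {α : Option ℚ | IsPreperiodicPt phi14 α} =
        ({some 0, some 1, none, some 2, some (-1), some (1 / 2)} :
          Set (Option ℚ)) ∧
      {α : Option ℚ | IsPreperiodicPt phi14 α}.ncard = 6 ∧
      (∀ α : Option ℚ, phi14 α = α ↔
        α ∈ ({some 0, some 1, none} : Set (Option ℚ))) ∧
      phi14 (some 2) = some 0 ∧ phi14 (some (-1)) = some 1 ∧
      phi14 (some (1 / 2)) = none := by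
  refine ⟨setOf_isPreperiodicPt_phi14, ?_, fun α ↦ (phi14_eq_self_iff α).trans (by simp),
    phi14_two, phi14_neg_one, phi14_one_half⟩
  rw [setOf_isPreperiodicPt_phi14, Set.ncard_eq_toFinset_card']
  decide +kernel
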